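/- arXiv:2308.11037 — 4 statements merged into one kernel-verified Lean document; each statement's English description precedes it below -/
import Mathlib

section
/- Let φ* be of the generalized highest posterior density form with threshold κ_α > 0 (φ* = 1 on {π > κ_α}, = 0 on {π < κ_α}) with ∫ φ* π dμ = 1 − α, and let φ′ : Ω_Θ → [0,1] satisfy ∫ φ′ π dμ = 1 − α and ∫ φ′ dμ = ∫ φ* dμ. Then (φ* − φ′)(π − κ_α) = 0 μ-almost everywhere; in particular, φ* = φ′ π·μ-almost everywhere on the set {π ≠ κ_α}. -/
open MeasureTheory ENNReal

/-!
Pointwise, `φ*` and `φ'` are ordered the same way as `π` and `κ_α`, so `(φ* - φ')(π - κ_α) ≥ 0`.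
Its integral is `∫ φ* π - ∫ φ' π - κ_α (∫ φ* - ∫ φ')`, which vanishes by the two constraints,
so the integrand vanishes almost everywhere. In `ℝ≥0∞` the product is split into its two
truncated halves, and the cancellation uses `κ_α ∫ φ* ≤ ∫ φ* π < ∞`.
-/

/-- `(a, b)` and `(c, d)` are ordered alike; in a ring this is `0 ≤ (a - b) * (c - d)`. -/
def SameOrder {R : Type*} [LE R] (a b c d : R) : Prop := (b ≤ a ∧ d ≤ c) ∨ (a ≤ b ∧ c ≤ d)

theorem sameOrder_of_le_one {R : Type*} [AddCommMonoid R] [One R] [LinearOrder R]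
    [CanonicallyOrderedAdd R] {a b c d : R} (hb : b ≤ 1) (hup : d < c → a = 1)
    (hdown : c < d → a = 0) : SameOrder a b c d := by
  rcases lt_trichotomy c d with hcd | rfl | hdc
  · exact .inr ⟨by rw [hdown hcd]; exact zero_le, hcd.le⟩
  · rcases le_total a b with hab | hba
    exacts [.inr ⟨hab, le_rfl⟩, .inl ⟨hba, le_rfl⟩]
  · exact .inl ⟨by rw [hup hdc]; exact hb, hdc.le⟩

namespace SameOrder

variable {R : Type*} [CommSemiring R] [LinearOrder R] [CanonicallyOrderedAdd R] [Sub R]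
  [OrderedSub R] {a b c d : R}

theorem mul_add_mul_eq (h : SameOrder a b c d) :
    a * c + b * d = b * c + a * d + ((a - b) * (c - d) + (b - a) * (d - c)) := by
  rcases h with ⟨hba, hdc⟩ | ⟨hab, hcd⟩
  · have ha := (tsub_add_cancel_of_le hba).symm
    have hc := (tsub_add_cancel_of_le hdc).symm
    rw [tsub_eq_zero_of_le hba, tsub_eq_zero_of_le hdc, mul_zero, add_zero]
    generalize a - b = x at ha ⊢
    generalize c - d = y at hc ⊢
    subst ha hc
    ring
  · have hb := (tsub_add_cancel_of_le hab).symm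
    have hd := (tsub_add_cancel_of_le hcd).symm
    rw [tsub_eq_zero_of_le hab, tsub_eq_zero_of_le hcd, zero_mul, zero_add]
    generalize b - a = x at hb ⊢
    generalize d - c = y at hd ⊢
    subst hb hd
    ring

theorem eq_or_eq_of_tsub_mul_tsub_add_tsub_mul_tsub_eq_zero [NoZeroDivisors R]
    (h : SameOrder a b c d) (h0 : (a - b) * (c - d) + (b - a) * (d - c) = 0) : a = b ∨ c = d := by
  rcases h with ⟨hba, hdc⟩ | ⟨hab, hcd⟩
  · rw [tsub_eq_zero_of_le hba, zero_mul, add_zero] at h0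
    rcases mul_eq_zero.mp h0 with h | h
    exacts [.inl (le_antisymm (tsub_eq_zero_iff_le.mp h) hba),
      .inr (le_antisymm (tsub_eq_zero_iff_le.mp h) hdc)]
  · rw [tsub_eq_zero_of_le hab, zero_mul, zero_add] at h0
    rcases mul_eq_zero.mp h0 with h | h
    exacts [.inl (le_antisymm hab (tsub_eq_zero_iff_le.mp h)),
      .inr (le_antisymm hcd (tsub_eq_zero_iff_le.mp h))]

end SameOrder

section Lintegral

variable {Ω : Type*} [MeasurableSpace Ω] {μ : Measure Ω}

theorem const_mul_lintegral_le_lintegral_mul {f g : Ω → ℝ≥0∞} {k : ℝ≥0∞}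
    (hf : Measurable f) (hzero : ∀ θ, g θ < k → f θ = 0) :
    k * ∫⁻ θ, f θ ∂μ ≤ ∫⁻ θ, f θ * g θ ∂μ := by
  rw [← lintegral_const_mul k hf]
  refine lintegral_mono fun θ => ?_
  rcases lt_or_ge (g θ) k with hlt | hle
  · simp [hzero θ hlt]
  · rw [mul_comm]
    gcongr

theorem ae_eq_or_eq_of_sameOrder {s t p : Ω → ℝ≥0∞} {k : ℝ≥0∞} (hs : Measurable s)
    (ht : Measurable t) (hp : Measurable p) (hord : ∀ θ, SameOrder (s θ) (t θ) (p θ) k)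
    (hlev : ∫⁻ θ, s θ * p θ ∂μ = ∫⁻ θ, t θ * p θ ∂μ) (hsize : ∫⁻ θ, t θ ∂μ = ∫⁻ θ, s θ ∂μ)
    (hfin : ∫⁻ θ, s θ * p θ ∂μ + k * ∫⁻ θ, s θ ∂μ ≠ ∞) :
    ∀ᵐ θ ∂μ, s θ = t θ ∨ p θ = k := by
  set e : Ω → ℝ≥0∞ := fun θ => (s θ - t θ) * (p θ - k) + (t θ - s θ) * (k - p θ)
  have he : Measurable e := by fun_prop
  have hint : ∫⁻ θ, s θ * p θ ∂μ + k * ∫⁻ θ, s θ ∂μ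
      = ∫⁻ θ, s θ * p θ ∂μ + k * ∫⁻ θ, s θ ∂μ + ∫⁻ θ, e θ ∂μ :=
    calc _ = ∫⁻ θ, (s θ * p θ + t θ * k) ∂μ := by
          rw [lintegral_add_left (f := fun θ => s θ * p θ) (by fun_prop), ← hsize,
            lintegral_mul_const _ ht, mul_comm]
      _ = ∫⁻ θ, (t θ * p θ + s θ * k + e θ) ∂μ :=
          lintegral_congr fun θ => (hord θ).mul_add_mul_eq
      _ = _ := by
          rw [lintegral_add_left (by fun_prop),
            lintegral_add_left (f := fun θ => t θ * p θ) (by fun_prop),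
            lintegral_mul_const _ hs, hlev, mul_comm]
  have he0 : ∫⁻ θ, e θ ∂μ = 0 := by
    simpa using (ENNReal.add_right_inj hfin).mp (hint.symm.trans (add_zero _).symm)
  filter_upwards [(lintegral_eq_zero_iff he).mp he0] with θ hθ
  exact (hord θ).eq_or_eq_of_tsub_mul_tsub_add_tsub_mul_tsub_eq_zero hθ

end Lintegral

theorem generalized_hpd_unique_general
    {Ω : Type*} [MeasurableSpace Ω] (μ : Measure Ω)
    (π φstar φ' : Ω → ℝ≥0∞)
    (hπm : Measurable π)
    (hφsm : Measurable φstar) (hφ'm : Measurable φ')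
    (hφ'1 : ∀ θ, φ' θ ≤ 1)
    (κα : ℝ≥0∞)
    (α : ℝ)
    (hup : ∀ θ, κα < π θ → φstar θ = 1)
    (hdown : ∀ θ, π θ < κα → φstar θ = 0)
    (hlevs : ∫⁻ θ, φstar θ * π θ ∂μ = ENNReal.ofReal (1 - α))
    (hlev' : ∫⁻ θ, φ' θ * π θ ∂μ = ENNReal.ofReal (1 - α))
    (hsize : ∫⁻ θ, φ' θ ∂μ = ∫⁻ θ, φstar θ ∂μ) :
    ∀ᵐ θ ∂μ, φstar θ = φ' θ ∨ π θ = κα := by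
  have hord : ∀ θ, SameOrder (φstar θ) (φ' θ) (π θ) κα := fun θ =>
    sameOrder_of_le_one (hφ'1 θ) (hup θ) (hdown θ)
  have hmass : κα * ∫⁻ θ, φstar θ ∂μ ≤ ∫⁻ θ, φstar θ * π θ ∂μ :=
    const_mul_lintegral_le_lintegral_mul hφsm hdown
  have hfin : ∫⁻ θ, φstar θ * π θ ∂μ + κα * ∫⁻ θ, φstar θ ∂μ ≠ ∞ := by
    rw [hlevs] at hmass ⊢
    exact add_ne_top.mpr ⟨ofReal_ne_top, ne_top_of_le_ne_top ofReal_ne_top hmass⟩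
  exact ae_eq_or_eq_of_sameOrder hφsm hφ'm hπm hord (hlevs.trans hlev'.symm) hsize hfin

/-- Uniqueness of the smallest generalized credible set: any other smallest
generalized credible set of the same level agrees with the generalized
highest posterior density credible set off the level set `{π = κ_α}`,
i.e. `(φ* - φ')(π - κ_α) = 0` almost everywhere. -/
theorem generalized_hpd_unique
    {Ω : Type*} [MeasurableSpace Ω] (μ : Measure Ω) [SigmaFinite μ]
    (π φstar φ' : Ω → ℝ≥0∞)
    (hπm : Measurable π) (hπ1 : ∫⁻ θ, π θ ∂μ = 1)
    (hφsm : Measurable φstar) (hφ'm : Measurable φ')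
    (hφs1 : ∀ θ, φstar θ ≤ 1) (hφ'1 : ∀ θ, φ' θ ≤ 1)
    (κα : ℝ≥0∞) (hκpos : 0 < κα) (hκfin : κα ≠ ∞)
    (α : ℝ) (hα0 : 0 < α) (hα1 : α < 1)
    (hup : ∀ θ, κα < π θ → φstar θ = 1)
    (hdown : ∀ θ, π θ < κα → φstar θ = 0)
    (hlevs : ∫⁻ θ, φstar θ * π θ ∂μ = ENNReal.ofReal (1 - α))
    (hlev' : ∫⁻ θ, φ' θ * π θ ∂μ = ENNReal.ofReal (1 - α))
    (hsize : ∫⁻ θ, φ' θ ∂μ = ∫⁻ θ, φstar θ ∂μ) :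
    ∀ᵐ θ ∂μ, φstar θ = φ' θ ∨ π θ = κα :=
  generalized_hpd_unique_general μ π φstar φ' hπm hφsm hφ'm hφ'1 κα α hup hdown hlevs hlev' hsize
end

section
/- Let φ* be a generalized highest posterior density credible set of level 1 − α with threshold κ_α and boundary value function γ on K = {π = κ_α}, where p = ∫_K π dμ > 0. Then the variance of φ*(Θ) equals P(π(Θ) > κ_α) + ∫_K γ² π dμ − (1 − α)², and this is minimized over all admissible γ (those with ∫_K γ π dμ = 1 − α − P(π(Θ) > κ_α)) precisely when γ is the constant (1 − α − P(π(Θ) > κ_α))/p. -/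
open MeasureTheory ENNReal
open scoped NNReal
lemma amgm_ennreal (a b : ℝ≥0∞) : 2 * a * b ≤ a ^ 2 + b ^ 2 := by
  rcases eq_or_ne a ∞ with ha | ha
  · rcases eq_or_ne b 0 with hb | hb
    · simp [hb]
    · have : a ^ 2 = ∞ := by simp [ha, pow_eq_top_iff]
      simp [this]
  rcases eq_or_ne b ∞ with hb | hb
  · rcases eq_or_ne a 0 with ha0 | ha0
    · simp [ha0]
    · have : b ^ 2 = ∞ := by simp [hb, pow_eq_top_iff]
      simp [this]
  lift a to ℝ≥0 using ha
  lift b to ℝ≥0 using hb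
  have h : 2 * a * b ≤ a ^ 2 + b ^ 2 := by
    have := two_mul_le_add_sq (a : ℝ) (b : ℝ)
    exact_mod_cast this
  exact_mod_cast h

lemma sub_sq_identity_nnreal (a b : ℝ≥0) :
    (a - b) ^ 2 + (b - a) ^ 2 + 2 * a * b = a ^ 2 + b ^ 2 := by
  rcases le_total a b with h | h
  · have h1 : a - b = 0 := tsub_eq_zero_of_le h
    apply NNReal.coe_injective
    push_cast [h1, NNReal.coe_sub h]
    ring
  · have h1 : b - a = 0 := tsub_eq_zero_of_le h
    apply NNReal.coe_injective
    push_cast [h1, NNReal.coe_sub h]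
    ring

lemma sub_sq_identity (a b : ℝ≥0∞) (ha : a ≠ ∞) (hb : b ≠ ∞) :
    (a - b) ^ 2 + (b - a) ^ 2 + 2 * a * b = a ^ 2 + b ^ 2 := by
  lift a to ℝ≥0 using ha
  lift b to ℝ≥0 using hb
  rw [← ENNReal.coe_sub, ← ENNReal.coe_sub]
  exact_mod_cast sub_sq_identity_nnreal a b

/-- The variance of a generalized highest posterior density credible set
`φ*` with boundary value function `γ` satisfies
`var(φ*(Θ)) = P(π(Θ) > κ_α) + ∫_K γ² π dμ - (1 - α)²`, and it is minimized over
all admissible boundary functions exactly when `γ` equals the constant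
`(1 - α - P(π(Θ) > κ_α)) / p` almost everywhere on `K` (w.r.t. the posterior
probability). -/
theorem fair_ghpd_variance
    {Ω : Type*} [MeasurableSpace Ω] (μ : Measure Ω) [SigmaFinite μ]
    (π : Ω → ℝ) (hπm : Measurable π) (hπ0 : ∀ θ, 0 ≤ π θ)
    (hπ1 : ∫⁻ θ, ENNReal.ofReal (π θ) ∂μ = 1)
    (α : ℝ) (hα0 : 0 < α) (hα1 : α < 1)
    (κα : ℝ) (hκpos : 0 < κα)
    (K : Set Ω) (hK : K = {θ | π θ = κα})
    (p : ℝ≥0∞) (hp : p = ∫⁻ θ in K, ENNReal.ofReal (π θ) ∂μ) (hppos : 0 < p)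
    (c : ℝ≥0∞)
    (hc : c = ENNReal.ofReal (1 - α) - ∫⁻ θ in {θ | κα < π θ}, ENNReal.ofReal (π θ) ∂μ)
    (γ : Ω → ℝ≥0∞) (hγm : Measurable γ) (hγ1 : ∀ θ, γ θ ≤ 1)
    (hγc : (∫⁻ θ in K, γ θ * ENNReal.ofReal (π θ) ∂μ) = c)
    (φstar : Ω → ℝ≥0∞)
    (hφstar : ∀ θ, φstar θ = if κα < π θ then 1 else if π θ = κα then γ θ else 0)
    (hlev : ∫⁻ θ, φstar θ * ENNReal.ofReal (π θ) ∂μ = ENNReal.ofReal (1 - α)) :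
    -- variance formula: E[φ*(Θ)²] − (1-α)² = P(π(Θ) > κ_α) + ∫_K γ² π dμ − (1-α)²
    (∫⁻ θ, (φstar θ) ^ 2 * ENNReal.ofReal (π θ) ∂μ) - (ENNReal.ofReal (1 - α)) ^ 2
      = (∫⁻ θ in {θ | κα < π θ}, ENNReal.ofReal (π θ) ∂μ)
        + (∫⁻ θ in K, (γ θ) ^ 2 * ENNReal.ofReal (π θ) ∂μ)
        - (ENNReal.ofReal (1 - α)) ^ 2 ∧
    -- the variance is minimal among admissible boundary functions iff γ = c/p a.e.
    ((∀ γ' : Ω → ℝ≥0∞, Measurable γ' → (∀ θ, γ' θ ≤ 1) →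
        (∫⁻ θ in K, γ' θ * ENNReal.ofReal (π θ) ∂μ) = c →
        (∫⁻ θ in K, (γ θ) ^ 2 * ENNReal.ofReal (π θ) ∂μ)
          ≤ ∫⁻ θ in K, (γ' θ) ^ 2 * ENNReal.ofReal (π θ) ∂μ) ↔
      (∀ᵐ θ ∂((μ.restrict K).withDensity fun θ => ENNReal.ofReal (π θ)),
        γ θ = c / p)) := by
  have hKm : MeasurableSet K := by
    rw [hK]; exact hπm (measurableSet_singleton κα)
  have hAm : MeasurableSet {θ | κα < π θ} := measurableSet_lt measurable_const hπm
  set ρ : Ω → ℝ≥0∞ := fun θ => ENNReal.ofReal (π θ) with hρ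
  have hρm : Measurable ρ := ENNReal.measurable_ofReal.comp hπm
  set ν : Measure Ω := (μ.restrict K).withDensity ρ with hν
  -- translation lemma
  have htrans : ∀ f : Ω → ℝ≥0∞, Measurable f →
      ∫⁻ θ in K, f θ * ρ θ ∂μ = ∫⁻ θ, f θ ∂ν := by
    intro f hf
    rw [hν, lintegral_withDensity_eq_lintegral_mul _ hρm hf]
    simp only [Pi.mul_apply, mul_comm]
  have hνuniv : ν Set.univ = p := by
    rw [hν, withDensity_apply _ MeasurableSet.univ, Measure.restrict_univ]
    exact hp.symm
  have hp1 : p ≤ 1 := by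
    rw [hp, ← hπ1]
    exact setLIntegral_le_lintegral _ _
  have hptop : p ≠ ∞ := (hp1.trans_lt one_lt_top).ne
  have hp0 : p ≠ 0 := hppos.ne'
  have hcν : ∫⁻ θ, γ θ ∂ν = c := by rw [← htrans γ hγm]; exact hγc
  have hcp : c ≤ p := by
    rw [← hcν, hp]
    calc ∫⁻ θ, γ θ ∂ν ≤ ∫⁻ θ, 1 ∂ν := lintegral_mono hγ1
    _ = ν Set.univ := lintegral_one
    _ = p := hνuniv
    _ = ∫⁻ θ in K, ρ θ ∂μ := hp
  have hctop : c ≠ ∞ := (hcp.trans_lt (hp1.trans_lt one_lt_top)).ne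
  set m : ℝ≥0∞ := c / p with hm
  have hmp : m * p = c := ENNReal.div_mul_cancel hp0 hptop
  have hmtop : m ≠ ∞ := by
    rw [hm]; exact (ENNReal.div_lt_top hctop hp0).ne
  have hm1 : m ≤ 1 := by
    rw [hm, ENNReal.div_le_iff hp0 hptop, one_mul]; exact hcp
  have hmc_top : m * c ≠ ∞ := ENNReal.mul_ne_top hmtop hctop
  have hm2p : m ^ 2 * p = m * c := by rw [pow_two, mul_assoc, hmp]
  -- lower bound for any admissible function
  have hlow : ∀ g : Ω → ℝ≥0∞, Measurable g → (∫⁻ θ, g θ ∂ν = c) →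
      m * c ≤ ∫⁻ θ, (g θ) ^ 2 ∂ν := by
    intro g hg hgc
    have h1 : ∫⁻ θ, 2 * m * g θ ∂ν ≤ ∫⁻ θ, ((g θ) ^ 2 + m ^ 2) ∂ν := by
      refine lintegral_mono fun θ => ?_
      calc 2 * m * g θ ≤ m ^ 2 + (g θ) ^ 2 := amgm_ennreal m (g θ)
      _ = (g θ) ^ 2 + m ^ 2 := add_comm _ _
    rw [lintegral_const_mul (2 * m) hg, hgc] at h1
    rw [lintegral_add_right _ measurable_const, lintegral_const, hνuniv, hm2p] at h1
    have h2 : m * c + m * c ≤ (∫⁻ θ, (g θ) ^ 2 ∂ν) + m * c := by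
      calc m * c + m * c = 2 * m * c := by ring
      _ ≤ _ := h1
    exact (ENNReal.add_le_add_iff_right hmc_top).mp h2
  constructor
  · -- Part 1
    congr 1
    have hpt : ∀ θ, (φstar θ) ^ 2 * ρ θ
        = Set.indicator {θ | κα < π θ} ρ θ + Set.indicator K (fun θ => (γ θ) ^ 2 * ρ θ) θ := by
      intro θ
      rw [hφstar θ]
      by_cases h1 : κα < π θ
      · have h2 : π θ ≠ κα := ne_of_gt h1
        simp [Set.indicator, h1, hK, h2]
      · by_cases h2 : π θ = κα
        · simp [Set.indicator, h1, h2, hK]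
        · simp [Set.indicator, h1, h2, hK]
    rw [lintegral_congr hpt,
      lintegral_add_left (hρm.indicator hAm),
      lintegral_indicator hAm _, lintegral_indicator hKm _]
  · -- Part 2
    have htr : ∀ g : Ω → ℝ≥0∞, Measurable g →
        ∫⁻ θ in K, (g θ) ^ 2 * ρ θ ∂μ = ∫⁻ θ, (g θ) ^ 2 ∂ν := fun g hg =>
      htrans (fun θ => (g θ) ^ 2) (hg.pow_const 2)
    constructor
    · intro hmin
      -- apply minimality to the constant m
      have hconst : ∫⁻ θ in K, (fun _ : Ω => m) θ * ρ θ ∂μ = c := by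
        rw [htrans (fun _ => m) measurable_const, lintegral_const, hνuniv, hmp]
      have h1 := hmin (fun _ => m) measurable_const (fun _ => hm1) hconst
      rw [htr γ hγm, htr (fun _ => m) measurable_const, lintegral_const, hνuniv, hm2p] at h1
      have h2 := hlow γ hγm hcν
      have heq : ∫⁻ θ, (γ θ) ^ 2 ∂ν = m * c := le_antisymm h1 h2
      -- deduce a.e. equality
      have hγtop : ∀ θ, γ θ ≠ ∞ := fun θ => ((hγ1 θ).trans_lt one_lt_top).ne
      have hf1m : Measurable fun θ => (γ θ - m) ^ 2 + (m - γ θ) ^ 2 :=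
        ((hγm.sub measurable_const).pow_const 2).add
          ((measurable_const.sub hγm).pow_const 2)
      have hzero : ∫⁻ θ, ((γ θ - m) ^ 2 + (m - γ θ) ^ 2) ∂ν = 0 := by
        have hid : ∀ θ, ((γ θ - m) ^ 2 + (m - γ θ) ^ 2) + 2 * γ θ * m
            = (γ θ) ^ 2 + m ^ 2 := by
          intro θ
          exact sub_sq_identity (γ θ) m (hγtop θ) hmtop
        have hint : (∫⁻ θ, ((γ θ - m) ^ 2 + (m - γ θ) ^ 2) ∂ν) + (m * c + m * c)
            = 0 + (m * c + m * c) := by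
          rw [zero_add]
          have e1 : ∫⁻ θ, (((γ θ - m) ^ 2 + (m - γ θ) ^ 2) + 2 * γ θ * m) ∂ν
              = ∫⁻ θ, ((γ θ) ^ 2 + m ^ 2) ∂ν := lintegral_congr hid
          rw [lintegral_add_left hf1m] at e1
          rw [lintegral_add_right _ measurable_const, heq, lintegral_const, hνuniv,
            hm2p] at e1
          have e2 : ∫⁻ θ, 2 * γ θ * m ∂ν = m * c + m * c := by
            have : ∀ θ, 2 * γ θ * m = (2 * m) * γ θ := fun θ => by ring
            rw [lintegral_congr this, lintegral_const_mul (2 * m) hγm, hcν]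
            ring
          rw [e2] at e1
          exact e1
        exact (ENNReal.add_left_inj (ENNReal.add_ne_top.mpr ⟨hmc_top, hmc_top⟩)).mp hint
      have hae := (lintegral_eq_zero_iff hf1m).mp hzero
      filter_upwards [hae] with θ hθ
      simp only [Pi.zero_apply, add_eq_zero, pow_eq_zero_iff, Ne, OfNat.ofNat_ne_zero,
        not_false_iff] at hθ
      have h3 : γ θ ≤ m := tsub_eq_zero_iff_le.mp hθ.1
      have h4 : m ≤ γ θ := tsub_eq_zero_iff_le.mp hθ.2
      exact le_antisymm h3 h4
    · intro hae γ' hγ'm hγ'1 hγ'c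
      rw [htr γ hγm, htr γ' hγ'm]
      have h1 : ∫⁻ θ, (γ θ) ^ 2 ∂ν = m * c := by
        have : ∫⁻ θ, (γ θ) ^ 2 ∂ν = ∫⁻ θ, m ^ 2 ∂ν := by
          refine lintegral_congr_ae ?_
          filter_upwards [hae] with θ hθ
          rw [hθ]
        rw [this, lintegral_const, hνuniv, hm2p]
      rw [h1]
      exact hlow γ' hγ'm (by rw [← htrans γ' hγ'm]; exact hγ'c)
end

section
/- Let Ω_Θ be finite with probability mass function π, and 0 < α < 1. Define κ_α and γ as in the fair generalized HPD construction: κ_α > 0 satisfies P(π(Θ) > κ_α) ≤ 1 − α ≤ P(π(Θ) ≥ κ_α), and γ = (1 − α − P(π(Θ) > κ_α))/P(π(Θ) = κ_α) if P(π(Θ) = κ_α) > 0 else 0. Then the function φ taking value 1 on {π > κ_α}, γ on {π = κ_α}, and 0 on {π < κ_α} satisfies ∑_θ φ(θ)π(θ) = 1 − α and has the smallest cardinality-type size ∑_θ φ(θ) among all φ′ : Ω_Θ → [0,1] with ∑_θ φ′(θ)π(θ) = 1 − α. -/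
open Finset

/-- Finite-parameter specialization: the fair generalized highest posterior
density credible set `φ` (value 1 above `κ_α`, `γ` at `κ_α`, 0 below) attains
the exact level `1 - α` and has the smallest size `∑ θ, φ θ` among all
generalized credible sets of level `1 - α`. -/
theorem finite_ghpd_exists_and_smallest
    {Ω : Type*} [Fintype Ω]
    (π : Ω → ℝ) (hπ0 : ∀ θ, 0 ≤ π θ) (hπ1 : ∑ θ, π θ = 1)
    (α : ℝ) (hα0 : 0 < α) (hα1 : α < 1)
    (κα : ℝ) (hκpos : 0 < κα)
    (hub : (∑ θ, if κα < π θ then π θ else 0) ≤ 1 - α)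
    (hlb : 1 - α ≤ ∑ θ, if κα ≤ π θ then π θ else 0)
    (γ : ℝ)
    (hγ : γ = if 0 < (∑ θ, if π θ = κα then π θ else 0) then
        (1 - α - ∑ θ, if κα < π θ then π θ else 0) / (∑ θ, if π θ = κα then π θ else 0)
      else 0)
    (φ : Ω → ℝ)
    (hφ : ∀ θ, φ θ = if κα < π θ then 1 else if π θ = κα then γ else 0) :
    (∑ θ, φ θ * π θ = 1 - α) ∧
    ∀ φ' : Ω → ℝ, (∀ θ, φ' θ ∈ Set.Icc (0:ℝ) 1) →
      (∑ θ, φ' θ * π θ = 1 - α) → ∑ θ, φ θ ≤ ∑ θ, φ' θ := by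
  set S1 : ℝ := ∑ θ, if κα < π θ then π θ else 0 with hS1
  set S2 : ℝ := ∑ θ, if π θ = κα then π θ else 0 with hS2
  have hsum : (∑ θ, if κα ≤ π θ then π θ else 0) = S1 + S2 := by
    rw [hS1, hS2, ← Finset.sum_add_distrib]
    apply Finset.sum_congr rfl
    intro θ _
    rcases lt_trichotomy (π θ) κα with h | h | h
    · simp [h.ne, not_le.mpr h, not_lt.mpr h.le]
    · simp [h, not_lt.mpr h.le]
    · simp [h, h.le, h.ne']
  have hS2nn : 0 ≤ S2 := Finset.sum_nonneg fun θ _ => by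
    split <;> [exact hπ0 θ; exact le_rfl]
  have hγ0 : 0 ≤ γ := by
    rw [hγ]
    split
    · exact div_nonneg (by linarith) (le_of_lt (by assumption))
    · exact le_rfl
  have hγ1 : γ ≤ 1 := by
    rw [hγ]
    split
    · rw [div_le_one (by assumption)]
      linarith [hsum ▸ hlb]
    · exact zero_le_one
  have hlevel : ∑ θ, φ θ * π θ = S1 + γ * S2 := by
    rw [hS1, hS2, Finset.mul_sum, ← Finset.sum_add_distrib]
    apply Finset.sum_congr rfl
    intro θ _
    rw [hφ θ]
    rcases lt_trichotomy (π θ) κα with h | h | h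
    · simp [h.ne, not_lt.mpr h.le]
    · simp [h, not_lt.mpr h.le]
    · simp [h, h.ne']
  have hlev : ∑ θ, φ θ * π θ = 1 - α := by
    rw [hlevel]
    rcases lt_or_eq_of_le hS2nn with h2 | h2
    · rw [hγ, if_pos h2, div_mul_cancel₀ _ (ne_of_gt h2)]
      ring
    · have h1 : S1 = 1 - α := by
        have := hsum ▸ hlb
        rw [← h2] at this
        linarith
      rw [← h2]
      linarith
  refine ⟨hlev, fun φ' hφ' hlev' => ?_⟩
  have key : 0 ≤ ∑ θ, (φ θ - φ' θ) * (π θ - κα) := by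
    apply Finset.sum_nonneg
    intro θ _
    rcases lt_trichotomy (π θ) κα with h | h | h
    · have hz : φ θ = 0 := by rw [hφ θ]; simp [h.ne, not_lt.mpr h.le]
      have h1 := (hφ' θ).1
      nlinarith
    · rw [h]; simp
    · have hz : φ θ = 1 := by rw [hφ θ]; simp [h]
      have h1 := (hφ' θ).2
      nlinarith
  have expand : ∑ θ, (φ θ - φ' θ) * (π θ - κα)
      = (∑ θ, φ θ * π θ - ∑ θ, φ' θ * π θ) - κα * (∑ θ, φ θ - ∑ θ, φ' θ) := by
    have h : ∀ θ : Ω, (φ θ - φ' θ) * (π θ - κα)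
        = (φ θ * π θ - φ' θ * π θ) - (κα * φ θ - κα * φ' θ) := fun θ => by ring
    simp only [h, Finset.sum_sub_distrib, ← Finset.mul_sum]
    ring
  rw [expand, hlev, hlev'] at key
  nlinarith
end

section
/- Let φ be any measurable function Ω_Θ → [0,1] with ∫ φ π dμ = 1 − α, and let φ* be the generalized HPD credible set with threshold κ_α and credible level 1 − α. If additionally ∫ φ dμ = ∫ φ* dμ (φ is also smallest) and μ({π = κ_α}) = 0, then φ = 1_{π > κ_α} μ-almost everywhere. -/
/-!
This is the equality case of the Neyman–Pearson lemma. Let `χ` be the indicator of `{π > κ}`.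
Pointwise `(χ - φ) (π - κ) ≥ 0`, and its integral vanishes because `φ` has the same posterior
mass and the same size as `φ*`, which agrees with `χ` off the null set `{π = κ}`. Hence
`(χ - φ) (π - κ) = 0` a.e., which forces `φ = χ` a.e. off `{π = κ}`.
-/

open MeasureTheory ENNReal

namespace ENNReal

theorem mul_add_le_add_mul_of_le {a k p : ℝ≥0∞} (ha : a ≤ 1) (hkp : k ≤ p) :
    a * p + k ≤ p + a * k := by
  obtain ⟨d, rfl⟩ := exists_add_of_le hkp
  calc a * (k + d) + k = a * k + k + a * d := by ring
    _ ≤ a * k + k + d := by gcongr; exact mul_le_of_le_one_left' ha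
    _ = k + d + a * k := by ring

theorem eq_one_of_mul_add_eq_add_mul {a k p : ℝ≥0∞} (ha : a ≤ 1) (hkp : k < p) (hp : p ≠ ∞)
    (h : a * p + k = p + a * k) : a = 1 := by
  obtain ⟨d, rfl⟩ := exists_add_of_le hkp.le
  have hd0 : d ≠ 0 := by rintro rfl; simp at hkp
  have hk : k ≠ ∞ := (hkp.trans_le le_top).ne
  have hd : d ≠ ∞ := (add_ne_top.1 hp).2
  have hak : a * k + k ≠ ∞ := add_ne_top.2 ⟨mul_ne_top (ha.trans_lt one_lt_top).ne hk, hk⟩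
  have had : a * d = 1 * d := by
    refine (ENNReal.add_right_inj hak).1 ?_
    calc a * k + k + a * d = a * (k + d) + k := by ring
      _ = k + d + a * k := h
      _ = a * k + k + 1 * d := by ring
  exact (ENNReal.mul_left_inj hd0 hd).1 had

theorem eq_zero_of_mul_eq_mul_of_lt {a p k : ℝ≥0∞} (ha : a ≠ ∞) (hpk : p < k)
    (h : a * p = a * k) : a = 0 := by
  by_contra ha0
  exact ((ENNReal.mul_lt_mul_iff_right ha0 ha).2 hpk).ne h

end ENNReal

/-- `(χ - φ) (π - κ) ≥ 0` for the indicator `χ` of `{π > κ}`, rearranged so that no truncated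
subtraction occurs. -/
theorem mul_add_indicator_mul_le {Ω : Type*} {π φ : Ω → ℝ≥0∞} {κ : ℝ≥0∞}
    (hφ1 : ∀ θ, φ θ ≤ 1) (θ : Ω) :
    φ θ * π θ + {θ | κ < π θ}.indicator (fun _ => 1) θ * κ
      ≤ {θ | κ < π θ}.indicator (fun _ => 1) θ * π θ + φ θ * κ := by
  by_cases hθ : κ < π θ
  · simpa [hθ] using mul_add_le_add_mul_of_le (hφ1 θ) hθ.le
  · have hπκ : π θ ≤ κ := not_lt.1 hθ
    simp only [Set.indicator_of_notMem (show θ ∉ {θ | κ < π θ} from hθ), zero_mul, add_zero,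
      zero_add]
    gcongr

section

variable {Ω : Type*} [MeasurableSpace Ω] {μ : Measure Ω} {π φ : Ω → ℝ≥0∞} {κ : ℝ≥0∞}

theorem ae_eq_indicator_of_null_level_set (hnull : μ {θ | π θ = κ} = 0)
    (hup : ∀ᵐ θ ∂μ, κ < π θ → φ θ = 1) (hdown : ∀ᵐ θ ∂μ, π θ < κ → φ θ = 0) :
    φ =ᵐ[μ] {θ | κ < π θ}.indicator (fun _ => 1) := by
  have hne : ∀ᵐ θ ∂μ, π θ ≠ κ := measure_eq_zero_iff_ae_notMem.1 hnull
  filter_upwards [hup, hdown, hne] with θ h1 h0 hθ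
  rcases hθ.lt_or_gt with hlt | hgt
  · simp [h0 hlt, hlt.not_gt]
  · simp [h1 hgt, hgt]

theorem ae_eq_indicator_of_lintegral_mul_eq_of_lintegral_eq (hπ : Measurable π)
    (hφ : Measurable φ) (hφ1 : ∀ θ, φ θ ≤ 1) (hnull : μ {θ | π θ = κ} = 0)
    (hfin : ∫⁻ θ in {θ | κ < π θ}, π θ ∂μ ≠ ∞)
    (hmass : ∫⁻ θ, φ θ * π θ ∂μ = ∫⁻ θ in {θ | κ < π θ}, π θ ∂μ)
    (hsize : ∫⁻ θ, φ θ ∂μ = μ {θ | κ < π θ}) :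
    φ =ᵐ[μ] {θ | κ < π θ}.indicator (fun _ => 1) := by
  set A := {θ | κ < π θ}
  have hA : MeasurableSet A := measurableSet_lt measurable_const hπ
  set χ := A.indicator (fun _ => (1 : ℝ≥0∞))
  have hχ : Measurable χ := measurable_const.indicator hA
  have hχA : ∫⁻ θ, χ θ ∂μ = μ A := lintegral_indicator_one hA
  have hχπ : ∫⁻ θ, χ θ * π θ ∂μ = ∫⁻ θ in A, π θ ∂μ := by
    rw [← lintegral_indicator hA]
    congr 1 with θ
    by_cases hθ : θ ∈ A <;> simp [χ, hθ]
  have hκA : μ A * κ ≤ ∫⁻ θ in A, π θ ∂μ := by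
    rw [mul_comm, ← setLIntegral_const]
    exact setLIntegral_mono hπ fun θ hθ => hθ.le
  have hlhs_fin : ∫⁻ θ, (φ θ * π θ + χ θ * κ) ∂μ ≠ ∞ := by
    rw [lintegral_add_left (f := fun θ => φ θ * π θ) (hφ.mul hπ), lintegral_mul_const _ hχ,
      hχA, hmass]
    exact add_ne_top.2 ⟨hfin, ne_top_of_le_ne_top hfin hκA⟩
  have hint : ∫⁻ θ, (χ θ * π θ + φ θ * κ) ∂μ = ∫⁻ θ, (φ θ * π θ + χ θ * κ) ∂μ := by
    rw [lintegral_add_left (f := fun θ => χ θ * π θ) (hχ.mul hπ),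
      lintegral_add_left (f := fun θ => φ θ * π θ) (hφ.mul hπ),
      lintegral_mul_const _ hφ, lintegral_mul_const _ hχ, hχA, hsize, hmass, hχπ]
  have heq := ae_eq_of_ae_le_of_lintegral_le (ae_of_all _ (mul_add_indicator_mul_le hφ1))
    hlhs_fin (by fun_prop) hint.le
  have hπA : ∀ᵐ θ ∂μ, θ ∈ A → π θ ≠ ∞ := by
    rw [← ae_restrict_iff' hA]
    filter_upwards [ae_lt_top hπ hfin] with θ h using h.ne
  apply ae_eq_indicator_of_null_level_set hnull
  · filter_upwards [heq, hπA] with θ h hπθ hθ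
    simp only [Set.indicator_of_mem (s := {θ | κ < π θ}) hθ, one_mul] at h
    exact eq_one_of_mul_add_eq_add_mul (hφ1 θ) hθ (hπθ hθ) h
  · filter_upwards [heq] with θ h hθ
    simp only [Set.indicator_of_notMem (s := {θ | κ < π θ}) hθ.not_gt, zero_mul, add_zero,
      zero_add] at h
    exact eq_zero_of_mul_eq_mul_of_lt ((hφ1 θ).trans_lt one_lt_top).ne hθ h

end

theorem smallest_is_indicator_of_null_level_set_general
    {Ω : Type*} [MeasurableSpace Ω] (μ : Measure Ω)
    (π φstar φ : Ω → ℝ≥0∞)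
    (hπm : Measurable π)
    (hφm : Measurable φ)
    (hφ1 : ∀ θ, φ θ ≤ 1)
    (κα : ℝ≥0∞)
    (α : ℝ)
    (hup : ∀ θ, κα < π θ → φstar θ = 1)
    (hdown : ∀ θ, π θ < κα → φstar θ = 0)
    (hlevs : ∫⁻ θ, φstar θ * π θ ∂μ = ENNReal.ofReal (1 - α))
    (hlev : ∫⁻ θ, φ θ * π θ ∂μ = ENNReal.ofReal (1 - α))
    (hsize : ∫⁻ θ, φ θ ∂μ = ∫⁻ θ, φstar θ ∂μ)
    (hnull : μ {θ | π θ = κα} = 0) :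
    ∀ᵐ θ ∂μ, φ θ = Set.indicator {θ | κα < π θ} (fun _ => (1 : ℝ≥0∞)) θ := by
  have hA : MeasurableSet {θ | κα < π θ} := measurableSet_lt measurable_const hπm
  have hstar := ae_eq_indicator_of_null_level_set hnull (ae_of_all μ hup) (ae_of_all μ hdown)
  have hmass : ∫⁻ θ, φstar θ * π θ ∂μ = ∫⁻ θ in {θ | κα < π θ}, π θ ∂μ := by
    rw [← lintegral_indicator hA]
    refine lintegral_congr_ae ?_
    filter_upwards [hstar] with θ h
    simp [h, Set.indicator_apply]
  have hvol : ∫⁻ θ, φstar θ ∂μ = μ {θ | κα < π θ} :=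
    (lintegral_congr_ae hstar).trans (lintegral_indicator_one hA)
  refine ae_eq_indicator_of_lintegral_mul_eq_of_lintegral_eq hπm hφm hφ1 hnull ?_
    (hlev.trans (hlevs.symm.trans hmass)) (hsize.trans hvol)
  rw [← hmass, hlevs]
  exact ofReal_ne_top

/-- When the threshold level set is `μ`-null, the unique smallest generalized
credible set of level `1 - α` is almost everywhere the indicator of
`{θ | π θ > κ_α}`, i.e. the classical highest posterior density credible
set. -/
theorem smallest_is_indicator_of_null_level_set
    {Ω : Type*} [MeasurableSpace Ω] (μ : Measure Ω) [SigmaFinite μ]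
    (π φstar φ : Ω → ℝ≥0∞)
    (hπm : Measurable π) (hπ1 : ∫⁻ θ, π θ ∂μ = 1)
    (hφsm : Measurable φstar) (hφm : Measurable φ)
    (hφs1 : ∀ θ, φstar θ ≤ 1) (hφ1 : ∀ θ, φ θ ≤ 1)
    (κα : ℝ≥0∞) (hκpos : 0 < κα) (hκfin : κα ≠ ∞)
    (α : ℝ) (hα0 : 0 < α) (hα1 : α < 1)
    (hup : ∀ θ, κα < π θ → φstar θ = 1)
    (hdown : ∀ θ, π θ < κα → φstar θ = 0)
    (hlevs : ∫⁻ θ, φstar θ * π θ ∂μ = ENNReal.ofReal (1 - α))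
    (hlev : ∫⁻ θ, φ θ * π θ ∂μ = ENNReal.ofReal (1 - α))
    (hsize : ∫⁻ θ, φ θ ∂μ = ∫⁻ θ, φstar θ ∂μ)
    (hnull : μ {θ | π θ = κα} = 0) :
    ∀ᵐ θ ∂μ, φ θ = Set.indicator {θ | κα < π θ} (fun _ => (1 : ℝ≥0∞)) θ :=
  smallest_is_indicator_of_null_level_set_general μ π φstar φ hπm hφm hφ1 κα α hup hdown hlevs hlev
    hsize hnull
end
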